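/- Let G be a labeled graph with adjacent vertices u, v carrying labels (0,α) and (0,β), and let G' be obtained from G by the fourth graph-move Ω4: replace G by piv(G;u,v) and set the sign of u to −β and the sign of v to −α. Then ⟨G'⟩ = ⟨G⟩. -/

import Mathlib

/-- A *labeled graph*: a finite simple graph whose vertices (a finite set of
natural numbers) carry a framing in `ZMod 2` and a sign (`true` = `+`, `false` = `-`). -/
structure LGraph where
  verts : Finset ℕ
  adj : ℕ → ℕ → Bool
  symm : ∀ x y, adj x y = adj y x
  loopless : ∀ x, adj x x = false
  adj_mem : ∀ x y, adj x y = true → x ∈ verts ∧ y ∈ verts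
  fr : ℕ → ZMod 2
  sgn : ℕ → Bool

namespace LGraph

/-- The adjacency matrix over `ZMod 2`, with framings on the diagonal. -/
def A (G : LGraph) : Matrix G.verts G.verts (ZMod 2) :=
  fun u v => if (u : ℕ) = (v : ℕ) then G.fr u else (if G.adj u v then 1 else 0)

/-- `corank (A(G) + E)` over `ZMod 2`. -/
noncomputable def corankAE (G : LGraph) : ℕ :=
  Fintype.card G.verts - (G.A + 1).rank

/-- `corank A(G)` over `ZMod 2`. -/
noncomputable def corankA (G : LGraph) : ℕ :=
  Fintype.card G.verts - G.A.rank

end LGraph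
namespace LGraph

/-- `G'` agrees with `G` (adjacency, framing and sign) away from the set `S`. -/
def sameOutside (G G' : LGraph) (S : Finset ℕ) : Prop :=
  (∀ x y, x ∉ S → y ∉ S → G'.adj x y = G.adj x y) ∧
  (∀ x, x ∉ S → G'.fr x = G.fr x ∧ G'.sgn x = G.sgn x)

/-- Ω1 (addition direction): `G'` is obtained from `G` by adding the isolated
vertex `v` with framing `0` and arbitrary sign. -/
def Omega1AddAt (G G' : LGraph) (v : ℕ) : Prop :=
  v ∉ G.verts ∧ G'.verts = insert v G.verts ∧ G'.fr v = 0 ∧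
    (∀ x, G'.adj v x = false) ∧ sameOutside G G' {v}

/-- Ω2 (addition direction): `G'` is obtained from `G` by adding two vertices `u, v`
with the same adjacencies with all other vertices, opposite signs, either
non-adjacent with framings `0` or adjacent with framings `1`. -/
def Omega2AddAt (G G' : LGraph) (u v : ℕ) : Prop :=
  u ≠ v ∧ u ∉ G.verts ∧ v ∉ G.verts ∧
    G'.verts = insert u (insert v G.verts) ∧
    G'.sgn u = !(G'.sgn v) ∧
    (∀ x, x ≠ u → x ≠ v → G'.adj u x = G'.adj v x) ∧
    ((G'.adj u v = false ∧ G'.fr u = 0 ∧ G'.fr v = 0) ∨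
     (G'.adj u v = true ∧ G'.fr u = 1 ∧ G'.fr v = 1)) ∧
    sameOutside G G' {u, v}

/-- Ω3 (forward direction) at vertices `u, v, w`, all labeled `(0,-)`, with `u`
adjacent exactly to `v` and `w`: the adjacency of `u` with every vertex lying in
exactly one of `N(v)`, `N(w)` is toggled and the signs of `v`,`w` become `+`. -/
def Omega3FwdAt (G G' : LGraph) (u v w : ℕ) : Prop :=
  u ≠ v ∧ u ≠ w ∧ v ≠ w ∧ u ∈ G.verts ∧ v ∈ G.verts ∧ w ∈ G.verts ∧
    G.fr u = 0 ∧ G.fr v = 0 ∧ G.fr w = 0 ∧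
    G.sgn u = false ∧ G.sgn v = false ∧ G.sgn w = false ∧
    (∀ x, G.adj u x = true ↔ (x = v ∨ x = w)) ∧
    G'.verts = G.verts ∧
    (∀ x, G'.adj u x = xor (xor (G.adj v x) (G.adj w x)) (G.adj u x)) ∧
    (∀ x y, x ≠ u → y ≠ u → G'.adj x y = G.adj x y) ∧
    G'.fr u = 0 ∧ G'.sgn u = false ∧
    G'.fr v = 0 ∧ G'.sgn v = true ∧ G'.fr w = 0 ∧ G'.sgn w = true ∧
    (∀ x, x ≠ u → x ≠ v → x ≠ w → (G'.fr x = G.fr x ∧ G'.sgn x = G.sgn x))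

/-- The (one-sided) pivot toggling condition at `u, v` for the pair `x, y`:
`x` is adjacent to `u`, `y` is adjacent to `v`, and `x` is not adjacent to `v`
or `y` is not adjacent to `u`. -/
def pivCond (G : LGraph) (u v x y : ℕ) : Prop :=
  G.adj u x = true ∧ G.adj v y = true ∧ (G.adj v x = false ∨ G.adj u y = false)

instance pivCond.instDecidable (G : LGraph) (u v x y : ℕ) :
    Decidable (pivCond G u v x y) := by
  unfold pivCond; infer_instance

/-- Ω4 at adjacent vertices `u, v` labeled `(0,α)`, `(0,β)`: `G'` is the pivot
`piv(G;u,v)` with the sign of `u` set to `-β` and the sign of `v` set to `-α`. -/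
def Omega4At (G G' : LGraph) (u v : ℕ) : Prop :=
  u ≠ v ∧ G.adj u v = true ∧ G.fr u = 0 ∧ G.fr v = 0 ∧
    G'.verts = G.verts ∧
    (∀ x y, G'.adj x y =
      (if x ≠ y ∧ x ∉ ({u, v} : Finset ℕ) ∧ y ∉ ({u, v} : Finset ℕ) ∧
          (pivCond G u v x y ∨ pivCond G u v y x)
       then !(G.adj x y) else G.adj x y)) ∧
    G'.fr u = 0 ∧ G'.fr v = 0 ∧
    G'.sgn u = !(G.sgn v) ∧ G'.sgn v = !(G.sgn u) ∧
    (∀ x, x ≠ u → x ≠ v → (G'.fr x = G.fr x ∧ G'.sgn x = G.sgn x))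

/-- Ω4' at a vertex `v` labeled `(1,α)`: `G'` is the local complement `LC(G;v)`
with the sign of `v` changed to `-α` and the framing of every neighbour of `v` toggled. -/
def Omega4pAt (G G' : LGraph) (v : ℕ) : Prop :=
  v ∈ G.verts ∧ G.fr v = 1 ∧
    G'.verts = G.verts ∧
    (∀ x y, G'.adj x y =
      (if x ≠ y ∧ G.adj v x = true ∧ G.adj v y = true
       then !(G.adj x y) else G.adj x y)) ∧
    G'.fr v = G.fr v ∧ G'.sgn v = !(G.sgn v) ∧
    (∀ x, x ≠ v → G'.sgn x = G.sgn x) ∧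
    (∀ x, x ≠ v → G'.fr x = (if G.adj v x then G.fr x + 1 else G.fr x))

/-- A single graph-move `Ω1`–`Ω4'` (in either direction). -/
inductive Move : LGraph → LGraph → Prop
  | o1a {G G' v} : Omega1AddAt G G' v → Move G G'
  | o1r {G G' v} : Omega1AddAt G' G v → Move G G'
  | o2a {G G' u v} : Omega2AddAt G G' u v → Move G G'
  | o2r {G G' u v} : Omega2AddAt G' G u v → Move G G'
  | o3f {G G' u v w} : Omega3FwdAt G G' u v w → Move G G'
  | o3b {G G' u v w} : Omega3FwdAt G' G u v w → Move G G'
  | o4 {G G' u v} : Omega4At G G' u v → Move G G'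
  | o4i {G G' u v} : Omega4At G' G u v → Move G G'
  | o4p {G G' v} : Omega4pAt G G' v → Move G G'
  | o4pi {G G' v} : Omega4pAt G' G v → Move G G'

end LGraph
namespace LGraph

/-- The induced labeled subgraph of `G` on a set `s` of vertices. -/
def induce (G : LGraph) (s : Finset ℕ) : LGraph where
  verts := s ∩ G.verts
  adj := fun x y => decide (x ∈ s) && decide (y ∈ s) && G.adj x y
  symm := by
    intro x y
    cases h1 : decide (x ∈ s) <;> cases h2 : decide (y ∈ s) <;>
      simp [h1, h2, G.symm x y]
  loopless := by intro x; simp [G.loopless x]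
  adj_mem := by
    intro x y h
    simp only [Bool.and_eq_true, decide_eq_true_eq] at h
    exact ⟨Finset.mem_inter.2 ⟨h.1.1, (G.adj_mem x y h.2).1⟩,
           Finset.mem_inter.2 ⟨h.1.2, (G.adj_mem x y h.2).2⟩⟩
  fr := G.fr
  sgn := G.sgn

/-- `α(s)`: the number of vertices in `s` with sign `-` plus the number of
vertices in `V(G) \ s` with sign `+`. -/
def alphaS (G : LGraph) (s : Finset ℕ) : ℕ :=
  (s.filter (fun v => G.sgn v = false)).card +
  ((G.verts \ s).filter (fun v => G.sgn v = true)).card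

/-- `β(s) = |V(G)| - α(s)`. -/
def betaS (G : LGraph) (s : Finset ℕ) : ℕ := G.verts.card - G.alphaS s

/-- The Kauffman bracket polynomial
`⟨G⟩ = Σ_s a^(α(s)-β(s)) (-a²-a⁻²)^(corank A(G(s)))` of a labeled graph, as a
Laurent polynomial in `a` over `ℤ`. -/
noncomputable def bracket (G : LGraph) : LaurentPolynomial ℤ :=
  ∑ s ∈ G.verts.powerset,
    LaurentPolynomial.T ((G.alphaS s : ℤ) - (G.betaS s : ℤ)) *
      (-(LaurentPolynomial.T 2) - LaurentPolynomial.T (-2)) ^ ((G.induce s).corankA)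

end LGraph

/-!
Match the subset `s` in the state sum of `G'` with `s ∆ {u, v}` in that of `G` when `s` contains
both or neither of `u, v`, and with `s` itself otherwise. Giving `u` the sign `-β` and `v` the sign
`-α` is exactly what makes the exponents `α - β` agree under this matching. The coranks agree
because over `𝔽₂` the pivot replaces the block of `A(G)` away from `u, v` by its Schur complement
with respect to the block `[[0, 1], [1, 0]]` on `u, v`. Concretely, with `b`, `c` the columns of
`u`, `v`, the involution `x ↦ x + (c ⬝ x) e_u + (b ⬝ x) e_v` carries the kernel of every principal
submatrix of `A(G')` onto the kernel of the matched principal submatrix of `A(G)`.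
-/

open Finset

section NullVectors

variable {K : Type*} [Field K]

/-- The kernel of the principal submatrix `M[s]`, its vectors extended by zero to all of `ℕ` so
that kernels for different `s` live in one space. -/
def nullVectors (M : ℕ → ℕ → K) (s : Finset ℕ) : Set (ℕ → K) :=
  {x | (∀ i ∉ s, x i = 0) ∧ ∀ i ∈ s, ∑ j ∈ s, M i j * x j = 0}

theorem natCard_nullVectors (M : ℕ → ℕ → K) (s : Finset ℕ) (N : Matrix s s K)
    (hN : ∀ i j, N i j = M i j) :
    Nat.card (nullVectors M s) = Nat.card K ^ (Fintype.card s - N.rank) := by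
  have hsum (i : ℕ) (x : ℕ → K) : ∑ j : s, M i j * x j = ∑ j ∈ s, M i j * x j :=
    Finset.sum_coe_sort s (fun j => M i j * x j)
  have e : nullVectors M s ≃ LinearMap.ker N.mulVecLin :=
    { toFun := fun x => ⟨fun i => x.1 i, by
        ext i
        simp only [Matrix.mulVecLin_apply, Matrix.mulVec, dotProduct, hN, Pi.zero_apply]
        rw [hsum]
        exact x.2.2 i i.2⟩
      invFun := fun y => ⟨fun n => if h : n ∈ s then y.1 ⟨n, h⟩ else 0, by
        refine ⟨fun i hi => dif_neg hi, fun i hi => ?_⟩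
        have hy := congrFun (LinearMap.mem_ker.1 y.2) ⟨i, hi⟩
        simp only [Matrix.mulVecLin_apply, Matrix.mulVec, dotProduct, hN, Pi.zero_apply] at hy
        rw [← hsum, ← hy]
        simp⟩
      left_inv := fun x => by
        ext n
        by_cases h : n ∈ s
        · simp [h]
        · simp [h, x.2.1 n h]
      right_inv := fun y => by ext; simp }
  have hrank := LinearMap.finrank_range_add_finrank_ker N.mulVecLin
  rw [Module.finrank_fintype_fun_eq_card] at hrank
  rw [Nat.card_congr e, Module.natCard_eq_pow_finrank (K := K), Matrix.rank]
  congr 1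
  omega

end NullVectors

section Pivot

/-- In the order `u, v, rest`: `M = [[0, 1, bᵀ], [1, 0, cᵀ], [b, c, D]]` and
`M' = [[0, 1, bᵀ], [1, 0, cᵀ], [b, c, D + b cᵀ + c bᵀ]]`. -/
structure IsPivot (M M' : ℕ → ℕ → ZMod 2) (u v : ℕ) : Prop where
  comm : ∀ i j, M i j = M j i
  comm' : ∀ i j, M' i j = M' j i
  apply_uu : M u u = 0
  apply_vv : M v v = 0
  apply_uv : M u v = 1
  row_u : ∀ j, M' u j = M u j
  row_v : ∀ j, M' v j = M v j
  apply_of_ne : ∀ i j, i ≠ u → i ≠ v → j ≠ u → j ≠ v →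
    M' i j = M i j + M u i * M v j + M v i * M u j

def pivotShear (M : ℕ → ℕ → ZMod 2) (u v : ℕ) (r : Finset ℕ) (x : ℕ → ZMod 2) :
    ℕ → ZMod 2 :=
  x + Pi.single u (∑ j ∈ r, M v j * x j) + Pi.single v (∑ j ∈ r, M u j * x j)

variable {M M' : ℕ → ℕ → ZMod 2} {u v : ℕ} {r : Finset ℕ} {x : ℕ → ZMod 2}

theorem sum_insert_insert {β : Type*} [AddCommMonoid β] {f : ℕ → β} (huv : u ≠ v) (hu : u ∉ r)
    (hv : v ∉ r) :
    ∑ j ∈ insert u (insert v r), f j = f u + f v + ∑ j ∈ r, f j := by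
  rw [sum_insert (by simp [huv, hu]), sum_insert hv, add_assoc]

theorem pivotShear_apply_of_ne {i : ℕ} (hiu : i ≠ u) (hiv : i ≠ v) :
    pivotShear M u v r x i = x i := by
  simp [pivotShear, hiu, hiv]

theorem pivotShear_apply_left (huv : u ≠ v) :
    pivotShear M u v r x u = x u + ∑ j ∈ r, M v j * x j := by
  simp [pivotShear, huv]

theorem pivotShear_apply_right (huv : u ≠ v) :
    pivotShear M u v r x v = x v + ∑ j ∈ r, M u j * x j := by
  simp [pivotShear, huv.symm]

theorem sum_mul_pivotShear (hu : u ∉ r) (hv : v ∉ r) (f : ℕ → ZMod 2) :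
    ∑ j ∈ r, f j * pivotShear M u v r x j = ∑ j ∈ r, f j * x j :=
  sum_congr rfl fun j hj => by
    rw [pivotShear_apply_of_ne (ne_of_mem_of_not_mem hj hu) (ne_of_mem_of_not_mem hj hv)]

theorem pivotShear_involutive (hu : u ∉ r) (hv : v ∉ r) :
    Function.Involutive (pivotShear M u v r) := by
  intro x
  rw [pivotShear, sum_mul_pivotShear hu hv, sum_mul_pivotShear hu hv]
  ext i
  simp only [pivotShear, Pi.add_apply]
  ring_nf
  reduce_mod_char

namespace IsPivot

theorem ne (P : IsPivot M M' u v) : u ≠ v := by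
  rintro rfl
  simpa [P.apply_uu] using P.apply_uv

theorem swap (P : IsPivot M M' u v) : IsPivot M M' v u where
  comm := P.comm
  comm' := P.comm'
  apply_uu := P.apply_vv
  apply_vv := P.apply_uu
  apply_uv := P.comm u v ▸ P.apply_uv
  row_u := P.row_v
  row_v := P.row_u
  apply_of_ne i j hiv hiu hjv hju := by rw [P.apply_of_ne i j hiu hiv hju hjv]; ring

theorem symm (P : IsPivot M M' u v) : IsPivot M' M u v where
  comm := P.comm'
  comm' := P.comm
  apply_uu := P.row_u u ▸ P.apply_uu
  apply_vv := P.row_v v ▸ P.apply_vv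
  apply_uv := P.row_u v ▸ P.apply_uv
  row_u j := (P.row_u j).symm
  row_v j := (P.row_v j).symm
  apply_of_ne i j hiu hiv hju hjv := by
    rw [P.apply_of_ne i j hiu hiv hju hjv, P.row_u, P.row_v, P.row_u, P.row_v]
    ring_nf
    reduce_mod_char

theorem pivotShear_eq (P : IsPivot M M' u v) : pivotShear M' u v r = pivotShear M u v r := by
  funext x
  simp only [pivotShear, P.row_u, P.row_v]

theorem sum_mul_eq (P : IsPivot M M' u v) (hu : u ∉ r) (hv : v ∉ r) {i : ℕ} (hiu : i ≠ u)
    (hiv : i ≠ v) (x : ℕ → ZMod 2) :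
    ∑ j ∈ r, M' i j * x j = ∑ j ∈ r, M i j * x j + M i u * ∑ j ∈ r, M v j * x j +
      M i v * ∑ j ∈ r, M u j * x j := by
  rw [P.comm i u, P.comm i v, mul_sum, mul_sum, ← sum_add_distrib, ← sum_add_distrib]
  refine sum_congr rfl fun j hj => ?_
  rw [P.apply_of_ne i j hiu hiv (ne_of_mem_of_not_mem hj hu) (ne_of_mem_of_not_mem hj hv)]
  ring

theorem pivotShear_mem_insert_insert (P : IsPivot M M' u v) (hu : u ∉ r) (hv : v ∉ r)
    (hx : x ∈ nullVectors M' r) :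
    pivotShear M u v r x ∈ nullVectors M (insert u (insert v r)) := by
  obtain ⟨hx0, hxr⟩ := hx
  refine ⟨fun i hi => ?_, fun i hi => ?_⟩
  · simp only [mem_insert, not_or] at hi
    rw [pivotShear_apply_of_ne hi.1 hi.2.1, hx0 i hi.2.2]
  rw [sum_insert_insert P.ne hu hv, sum_mul_pivotShear hu hv, pivotShear_apply_left P.ne,
    pivotShear_apply_right P.ne, hx0 u hu, hx0 v hv]
  rcases mem_insert.1 hi with rfl | hi
  · rw [P.apply_uu, P.apply_uv]; ring_nf; reduce_mod_char
  rcases mem_insert.1 hi with rfl | hi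
  · rw [P.apply_vv, P.comm, P.apply_uv]; ring_nf; reduce_mod_char
  have := hxr i hi
  rw [P.sum_mul_eq hu hv (ne_of_mem_of_not_mem hi hu) (ne_of_mem_of_not_mem hi hv)] at this
  linear_combination this

theorem pivotShear_mem_of_insert_insert (P : IsPivot M M' u v) (hu : u ∉ r) (hv : v ∉ r)
    (hx : x ∈ nullVectors M (insert u (insert v r))) :
    pivotShear M u v r x ∈ nullVectors M' r := by
  obtain ⟨hx0, hxr⟩ := hx
  have hrow (i : ℕ) (hi : i ∈ insert u (insert v r)) :
      M i u * x u + M i v * x v + ∑ j ∈ r, M i j * x j = 0 := by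
    rw [← sum_insert_insert (f := fun j => M i j * x j) P.ne hu hv]; exact hxr i hi
  have hxu : x u + ∑ j ∈ r, M v j * x j = 0 := by
    simpa [P.apply_vv, P.comm v u, P.apply_uv] using hrow v (by simp)
  have hxv : x v + ∑ j ∈ r, M u j * x j = 0 := by
    simpa [P.apply_uu, P.apply_uv] using hrow u (by simp)
  refine ⟨fun i hi => ?_, fun i hi => ?_⟩
  · by_cases hiu : i = u
    · rw [hiu, pivotShear_apply_left P.ne, hxu]
    by_cases hiv : i = v
    · rw [hiv, pivotShear_apply_right P.ne, hxv]
    rw [pivotShear_apply_of_ne hiu hiv, hx0 i (by simp [hiu, hiv, hi])]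
  have hiu := ne_of_mem_of_not_mem hi hu
  have hiv := ne_of_mem_of_not_mem hi hv
  rw [sum_mul_pivotShear hu hv, P.sum_mul_eq hu hv hiu hiv]
  linear_combination (norm := (ring_nf; reduce_mod_char))
    hrow i (by simp [hi]) + M i u * hxu + M i v * hxv

theorem pivotShear_mem_insert (P : IsPivot M M' u v) (hu : u ∉ r) (hv : v ∉ r)
    (hx : x ∈ nullVectors M' (insert u r)) :
    pivotShear M u v r x ∈ nullVectors M (insert u r) := by
  obtain ⟨hx0, hxr⟩ := hx
  have hxv : x v = 0 := hx0 v (by simp [P.ne.symm, hv])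
  have hβ : ∑ j ∈ r, M u j * x j = 0 := by
    simpa [sum_insert hu, P.row_u, P.apply_uu] using hxr u (mem_insert_self u r)
  refine ⟨fun i hi => ?_, fun i hi => ?_⟩
  · simp only [mem_insert, not_or] at hi
    by_cases hiv : i = v
    · rw [hiv, pivotShear_apply_right P.ne, hxv, hβ, add_zero]
    rw [pivotShear_apply_of_ne hi.1 hiv, hx0 i (by simp [hi])]
  rw [sum_insert hu, sum_mul_pivotShear hu hv, pivotShear_apply_left P.ne]
  rcases mem_insert.1 hi with rfl | hi
  · rw [P.apply_uu, hβ, zero_mul, add_zero]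
  have hiu := ne_of_mem_of_not_mem hi hu
  have hiv := ne_of_mem_of_not_mem hi hv
  have := hxr i (mem_insert_of_mem hi)
  rw [sum_insert hu, P.sum_mul_eq hu hv hiu hiv, P.comm' i u, P.row_u, P.comm u i, hβ] at this
  linear_combination this

theorem natCard_nullVectors_insert_insert (P : IsPivot M M' u v) (hu : u ∉ r) (hv : v ∉ r) :
    Nat.card (nullVectors M' r) = Nat.card (nullVectors M (insert u (insert v r))) :=
  Nat.card_congr <| ((pivotShear_involutive hu hv).toPerm _).subtypeEquiv fun x =>
    ⟨P.pivotShear_mem_insert_insert hu hv, fun hx =>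
      pivotShear_involutive hu hv x ▸ P.pivotShear_mem_of_insert_insert hu hv hx⟩

theorem natCard_nullVectors_insert (P : IsPivot M M' u v) (hu : u ∉ r) (hv : v ∉ r) :
    Nat.card (nullVectors M' (insert u r)) = Nat.card (nullVectors M (insert u r)) :=
  Nat.card_congr <| ((pivotShear_involutive hu hv).toPerm _).subtypeEquiv fun x =>
    ⟨P.pivotShear_mem_insert hu hv, fun hx => by
      have := P.symm.pivotShear_mem_insert hu hv hx
      rwa [P.pivotShear_eq, Function.Involutive.coe_toPerm, pivotShear_involutive hu hv x] at this⟩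

end IsPivot

/-- For `s` containing both or neither of `u, v` this is `s ∆ {u, v}`, otherwise `s` itself. -/
def pivotSwap (u v : ℕ) (s : Finset ℕ) : Finset ℕ :=
  s \ {u, v} ∪ ({u, v} : Finset ℕ).filter fun x => Equiv.swap u v x ∉ s

theorem mem_pivotSwap (huv : u ≠ v) {s : Finset ℕ} {x : ℕ} :
    x ∈ pivotSwap u v s ↔ if x = u then v ∉ s else if x = v then u ∉ s else x ∈ s := by
  by_cases hxu : x = u
  · simp [pivotSwap, hxu]
  by_cases hxv : x = v
  · simp [pivotSwap, hxv, huv.symm]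
  simp [pivotSwap, hxu, hxv]

theorem pivotSwap_involutive (huv : u ≠ v) : Function.Involutive (pivotSwap u v) := by
  intro s
  ext x
  simp only [mem_pivotSwap huv]
  split_ifs <;> simp_all

theorem pivotSwap_subset {W s : Finset ℕ} (hu : u ∈ W) (hv : v ∈ W) (hs : s ⊆ W) :
    pivotSwap u v s ⊆ W :=
  union_subset (sdiff_subset.trans hs)
    ((filter_subset _ _).trans (by simp [insert_subset_iff, hu, hv]))

theorem IsPivot.natCard_nullVectors_pivotSwap (P : IsPivot M M' u v) (s : Finset ℕ) :
    Nat.card (nullVectors M' s) = Nat.card (nullVectors M (pivotSwap u v s)) := by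
  have hu : u ∉ s \ {u, v} := by simp
  have hv : v ∉ s \ {u, v} := by simp
  by_cases hus : u ∈ s <;> by_cases hvs : v ∈ s
  · have hs : s = insert u (insert v (s \ {u, v})) := by
      ext x; simp only [mem_insert, mem_sdiff]; grind
    have hs' : pivotSwap u v s = s \ {u, v} := by
      ext x; simp only [mem_pivotSwap P.ne, mem_sdiff]; grind
    rw [hs']
    nth_rw 1 [hs]
    exact (P.symm.natCard_nullVectors_insert_insert hu hv).symm
  · have hs : s = insert u (s \ {u, v}) := by ext x; simp only [mem_insert, mem_sdiff]; grind
    have hs' : pivotSwap u v s = s := by ext x; simp only [mem_pivotSwap P.ne]; grind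
    rw [hs', hs]
    exact P.natCard_nullVectors_insert hu hv
  · have hs : s = insert v (s \ {u, v}) := by ext x; simp only [mem_insert, mem_sdiff]; grind
    have hs' : pivotSwap u v s = s := by ext x; simp only [mem_pivotSwap P.ne]; grind
    rw [hs', hs]
    exact P.swap.natCard_nullVectors_insert hv hu
  · have hs : s = s \ {u, v} := by ext x; simp only [mem_sdiff]; grind
    have hs' : pivotSwap u v s = insert u (insert v (s \ {u, v})) := by
      ext x; simp only [mem_pivotSwap P.ne, mem_insert, mem_sdiff]; grind
    rw [hs']
    nth_rw 1 [hs]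
    exact P.natCard_nullVectors_insert_insert hu hv

end Pivot

namespace LGraph

theorem Omega4At.verts_eq {G G' : LGraph} {u v : ℕ} (h : Omega4At G G' u v) :
    G'.verts = G.verts :=
  h.2.2.2.2.1

theorem Omega4At.left_mem {G G' : LGraph} {u v : ℕ} (h : Omega4At G G' u v) : u ∈ G.verts :=
  (G.adj_mem u v h.2.1).1

theorem Omega4At.right_mem {G G' : LGraph} {u v : ℕ} (h : Omega4At G G' u v) : v ∈ G.verts :=
  (G.adj_mem u v h.2.1).2

def entry (G : LGraph) (i j : ℕ) : ZMod 2 :=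
  if i = j then G.fr i else if G.adj i j then 1 else 0

theorem entry_comm (G : LGraph) (i j : ℕ) : G.entry i j = G.entry j i := by
  by_cases hij : i = j
  · rw [hij]
  · simp only [entry, hij, Ne.symm hij, if_false, G.symm i j]

theorem two_pow_corankA_induce (G : LGraph) {s : Finset ℕ} (hs : s ⊆ G.verts) :
    2 ^ (G.induce s).corankA = Nat.card (nullVectors G.entry s) := by
  have hverts : (G.induce s).verts = s := inter_eq_left.2 hs
  have hA (i j : (G.induce s).verts) : (G.induce s).A i j = G.entry i j := by
    have hi := (mem_inter.1 i.2).1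
    have hj := (mem_inter.1 j.2).1
    simp [A, induce, entry, hi, hj]
  have := natCard_nullVectors G.entry _ _ hA
  rw [Nat.card_zmod] at this
  rw [corankA, ← this, hverts]

/-- The pivot toggles the pair `i, j` iff exactly one of `u ~ i, v ~ j` and `v ~ i, u ~ j`
holds, which in `ZMod 2` is the sum of the two products. -/
theorem entry_pivot {G G' : LGraph} {u v : ℕ} (h : Omega4At G G' u v) {i j : ℕ}
    (hiu : i ≠ u) (hiv : i ≠ v) (hju : j ≠ u) (hjv : j ≠ v) :
    G'.entry i j = G.entry i j + G.entry u i * G.entry v j + G.entry v i * G.entry u j := by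
  obtain ⟨-, -, -, -, -, hadj, -, -, -, -, hfr⟩ := h
  by_cases hij : i = j
  · subst hij
    simp only [entry, if_true, (hfr i hiu hiv).1]
    ring_nf
    reduce_mod_char
  simp only [entry, hij, hiu.symm, hiv.symm, hju.symm, hjv.symm, if_false, hadj i j]
  simp only [ne_eq, hij, not_false_eq_true, mem_insert, mem_singleton, hiu, hiv, hju, hjv,
    or_self, true_and, pivCond]
  cases G.adj u i <;> cases G.adj v j <;> cases G.adj v i <;> cases G.adj u j <;>
    cases G.adj i j <;> decide

theorem Omega4At.isPivot_entry {G G' : LGraph} {u v : ℕ} (h : Omega4At G G' u v) :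
    IsPivot G.entry G'.entry u v := by
  obtain ⟨huv, huv_adj, hfru, hfrv, -, hadj, hfru', hfrv', -⟩ := id h
  have hrow (w j : ℕ) (hw : w = u ∨ w = v) (hfr : G'.fr w = G.fr w) :
      G'.entry w j = G.entry w j := by
    by_cases hwj : w = j
    · subst hwj; simp [entry, hfr]
    · simp [entry, hwj, hadj w j, hw]
  exact
    { comm := G.entry_comm
      comm' := G'.entry_comm
      apply_uu := by simp [entry, hfru]
      apply_vv := by simp [entry, hfrv]
      apply_uv := by simp [entry, huv, huv_adj]
      row_u := fun j => hrow u j (.inl rfl) (hfru'.trans hfru.symm)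
      row_v := fun j => hrow v j (.inr rfl) (hfrv'.trans hfrv.symm)
      apply_of_ne := fun _ _ => entry_pivot h }

theorem alphaS_eq_card_filter (G : LGraph) {s : Finset ℕ} (hs : s ⊆ G.verts) :
    G.alphaS s = #{x ∈ G.verts | x ∈ s ↔ G.sgn x = false} := by
  conv_rhs => rw [← union_sdiff_of_subset hs]
  rw [filter_union, card_union_of_disjoint (disjoint_filter_filter disjoint_sdiff), alphaS]
  congr 2
  · exact filter_congr fun x hx => by simp [hx]
  · exact filter_congr fun x hx => by simp [(mem_sdiff.1 hx).2]

/-- Counted through `Equiv.swap u v`: vertex `u` of `G'` contributes as vertex `v` of `G` does,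
and vice versa. -/
theorem Omega4At.alphaS_eq {G G' : LGraph} {u v : ℕ} (h : Omega4At G G' u v) {s : Finset ℕ}
    (hs : s ⊆ G.verts) : G'.alphaS s = G.alphaS (pivotSwap u v s) := by
  have hu := h.left_mem
  have hv := h.right_mem
  obtain ⟨huv, -, -, -, hverts, -, -, -, hsgnu, hsgnv, hsgn⟩ := h
  rw [G'.alphaS_eq_card_filter (hverts ▸ hs), G.alphaS_eq_card_filter (pivotSwap_subset hu hv hs),
    hverts]
  refine card_equiv (Equiv.swap u v) fun x => ?_
  simp only [mem_filter, mem_pivotSwap huv]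
  by_cases hxu : x = u
  · subst hxu
    simp [hsgnu, hu, hv, huv.symm]
    cases G.sgn v <;> simp
  by_cases hxv : x = v
  · subst hxv
    simp [hsgnv, hu, hv]
    cases G.sgn u <;> simp
  simp [Equiv.swap_apply_of_ne_of_ne hxu hxv, hxu, hxv, (hsgn x hxu hxv).2]

theorem Omega4At.betaS_eq {G G' : LGraph} {u v : ℕ} (h : Omega4At G G' u v) {s : Finset ℕ}
    (hs : s ⊆ G.verts) : G'.betaS s = G.betaS (pivotSwap u v s) := by
  rw [betaS, betaS, h.alphaS_eq hs, h.verts_eq]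

theorem Omega4At.corankA_induce_eq {G G' : LGraph} {u v : ℕ} (h : Omega4At G G' u v)
    {s : Finset ℕ} (hs : s ⊆ G.verts) :
    (G'.induce s).corankA = (G.induce (pivotSwap u v s)).corankA := by
  refine Nat.pow_right_injective le_rfl ?_
  simp only
  rw [G'.two_pow_corankA_induce (h.verts_eq ▸ hs),
    G.two_pow_corankA_induce (pivotSwap_subset h.left_mem h.right_mem hs),
    h.isPivot_entry.natCard_nullVectors_pivotSwap]

end LGraph

/-- The Kauffman bracket is invariant under the fourth
graph-move `Ω4` (pivot at two adjacent vertices labeled `(0,α)`, `(0,β)`,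
with the signs of `u`, `v` set to `-β`, `-α`). -/
theorem bracket_omega4 (G G' : LGraph) (u v : ℕ)
    (h : LGraph.Omega4At G G' u v) :
    G'.bracket = G.bracket := by
  have hsub {s : Finset ℕ} : s ⊆ G.verts → pivotSwap u v s ⊆ G.verts :=
    pivotSwap_subset h.left_mem h.right_mem
  rw [LGraph.bracket, LGraph.bracket, h.verts_eq]
  refine sum_equiv ((pivotSwap_involutive h.1).toPerm _) (fun s => ?_) fun s hs => ?_
  · simp only [mem_powerset, Function.Involutive.coe_toPerm]
    exact ⟨hsub, fun hs => pivotSwap_involutive h.1 s ▸ hsub hs⟩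
  · rw [mem_powerset] at hs
    rw [h.alphaS_eq hs, h.betaS_eq hs, h.corankA_induce_eq hs]
    rfl
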